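/- arXiv:2504.08955 — 2 statements merged into one kernel-verified Lean document; each statement's English description precedes it below -/
import Mathlib

section
/- Let (X, μ) be a standard Borel probability space and let φ be an ergodic measure-preserving flow on (X, μ). Then for Lebesgue-almost every s ∈ ℝ, the product flow Φ^s on (X × (ℝ/ℤ), μ ⊗ Lebesgue) is ergodic. -/
/-!
If `A ⊆ X × 𝕋` is invariant under `Φ^s`, the `n`-th Fourier coefficient of the slice
`r ↦ 1_A(x, r)` is an `L²` eigenfunction of `φ` with eigenvalue `-n s`. Eigenfunctions for distinct
eigenvalues are orthogonal, so by separability of `L²(μ)` the eigenvalues form a countable set, and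
for almost every `s` no nonzero multiple `n s` is an eigenvalue. For such `s` all nonzero Fourier
coefficients of almost every slice vanish, so almost every slice is null or conull. The measure of
the slice over `x` is `φ`-invariant, so by ergodicity of `φ` the slices over almost every `x` are
all null or all conull, and `A` has measure `0` or `1`.
-/

open MeasureTheory Filter

instance : Fact ((0 : ℝ) < 1) := ⟨one_pos⟩

/-- A flow is ergodic if every measurable set that is invariant (up to null sets)
under every time-`t` map has measure `0` or `1`. -/
def FlowErgodic {X : Type*} [MeasurableSpace X] (μ : Measure X) (φ : ℝ → X → X) : Prop :=
  ∀ A : Set X, MeasurableSet A → (∀ t : ℝ, φ t ⁻¹' A =ᵐ[μ] A) → μ A = 0 ∨ μ A = 1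

open ComplexConjugate AddCircle
open scoped FourierTransform

theorem Orthonormal.countable {𝕜 E ι : Type*} [RCLike 𝕜] [NormedAddCommGroup E]
    [InnerProductSpace 𝕜 E] [TopologicalSpace.SeparableSpace E] {v : ι → E}
    (hv : Orthonormal 𝕜 v) : Countable ι := by
  have hdist : Pairwise fun i j => 1 ≤ dist (v i) (v j) := by
    intro i j hij
    have h2 : dist (v i) (v j) ^ 2 = 2 := by
      rw [dist_eq_norm, @norm_sub_sq 𝕜, hv.1 i, hv.1 j, hv.2 hij]
      norm_num
    nlinarith [dist_nonneg (x := v i) (y := v j)]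
  refine Pairwise.countable_of_isOpen_disjoint (s := fun i => Metric.ball (v i) (1 / 2))
    (fun i j hij => Metric.ball_disjoint_ball ?_) (fun _ => Metric.isOpen_ball)
    (fun _ => Metric.nonempty_ball.2 one_half_pos)
  linarith [hdist hij]

theorem ae_forall_int_mul_notMem {E : Set ℝ} (hE : E.Countable) :
    ∀ᵐ s : ℝ, ∀ n : ℤ, n ≠ 0 → (n : ℝ) * s ∉ E := by
  refine ae_all_iff.2 fun n => ?_
  rcases eq_or_ne n 0 with rfl | hn
  · exact ae_of_all _ fun _ h => absurd rfl h
  · have hnull : volume ((fun s : ℝ => (n : ℝ) * s) ⁻¹' E) = 0 :=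
      (hE.preimage (mul_right_injective₀ (Int.cast_ne_zero.2 hn))).measure_zero _
    filter_upwards [measure_eq_zero_iff_ae_notMem.1 hnull] with s hs _ using hs

theorem measure_eq_zero_or_one_of_indicator_ae_eq_const {α M : Type*} [MeasurableSpace α]
    {ν : Measure α} [IsProbabilityMeasure ν] [Zero M] [One M] [NeZero (1 : M)] {s : Set α}
    {κ : M} (h : s.indicator 1 =ᵐ[ν] fun _ => κ) : ν s = 0 ∨ ν s = 1 := by
  rcases eq_or_ne κ 0 with rfl | hκ
  · refine .inl (measure_eq_zero_iff_ae_notMem.2 ?_)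
    filter_upwards [h] with r hr hrs
    simp [hrs] at hr
  · refine .inr ((measure_congr (ae_eq_univ.2 (mem_ae_iff.1 ?_))).trans measure_univ)
    filter_upwards [h] with r hr
    by_contra hrs
    exact hκ (by simpa [hrs] using hr.symm)

theorem MeasureTheory.Measure.ae_ae_eq_prodMk_preimage_of_prodMap {X Y : Type*} [MeasurableSpace X]
    [MeasurableSpace Y] {μ : Measure X} {ν : Measure Y} [SFinite ν] {A : Set (X × Y)}
    {f : X → X} {g : Y → Y} (h : Prod.map f g ⁻¹' A =ᵐ[μ.prod ν] A) :
    ∀ᵐ x ∂μ, g ⁻¹' (Prod.mk (f x) ⁻¹' A) =ᵐ[ν] Prod.mk x ⁻¹' A := by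
  filter_upwards [Measure.ae_ae_of_ae_prod (eventuallyEq_set.1 h)] with x hx
  exact eventuallyEq_set.2 hx

section Circle

variable {T : ℝ}

theorem fourier_coe_apply_eq_fourierChar (n : ℤ) (x : ℝ) :
    fourier n (x : AddCircle T) = 𝐞 (n * x / T) := by
  rw [fourier_coe_apply, Real.fourierChar_apply]
  push_cast
  ring_nf

theorem fourier_add_apply (n : ℤ) (x y : AddCircle T) :
    fourier n (x + y) = fourier n x * fourier n y := by
  simp only [fourier_apply, smul_add, toCircle_add, Circle.coe_mul]

variable [Fact (0 < T)]

theorem fourierCoeff_comp_add_right {E : Type*} [NormedAddCommGroup E] [NormedSpace ℂ E]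
    (f : AddCircle T → E) (a : AddCircle T) (n : ℤ) :
    fourierCoeff (fun r => f (r + a)) n = fourier n a • fourierCoeff f n := by
  have hshift : fourierCoeff f n = fourier (-n) a • fourierCoeff (fun r => f (r + a)) n := by
    rw [fourierCoeff, fourierCoeff, ← integral_add_right_eq_self _ a, ← integral_smul]
    simp only [fourier_add_apply, mul_smul, smul_comm (fourier (-n) a)]
  rw [hshift, smul_smul, ← fourier_add, add_neg_cancel, fourier_zero, one_smul]

theorem ae_eq_const_of_fourierCoeff_eq_zero {f : AddCircle T → ℂ}
    (hf : MemLp f 2 haarAddCircle) (h : ∀ n ≠ 0, fourierCoeff f n = 0) :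
    f =ᵐ[haarAddCircle] fun _ => fourierCoeff f 0 := by
  have hsum := hasSum_fourier_series_L2 (hf.toLp f)
  rw [fourierCoeff_congr_ae hf.coeFn_toLp] at hsum
  have h0 : hf.toLp f = fourierCoeff f 0 • fourierLp 2 0 :=
    hsum.unique (hasSum_single 0 fun n hn => by rw [h n hn, zero_smul])
  filter_upwards [hf.coeFn_toLp, Lp.coeFn_smul (fourierCoeff f 0) (fourierLp 2 (0 : ℤ)),
    coeFn_fourierLp 2 (0 : ℤ)] with r hfr hsr h0r
  rw [← hfr, h0, hsr, Pi.smul_apply, h0r, fourier_zero, smul_eq_mul, mul_one]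

end Circle

section Eigenfunctions

variable {X : Type*} [MeasurableSpace X] {μ : Measure X}

theorem integral_conj_mul_eq_of_comp_ae_eq_mul {T : X → X} (hT : MeasurePreserving T μ μ)
    {f g : X → ℂ} (hf : AEStronglyMeasurable f μ) (hg : AEStronglyMeasurable g μ) {a b : ℂ}
    (hfT : (fun x => f (T x)) =ᵐ[μ] fun x => a * f x)
    (hgT : (fun x => g (T x)) =ᵐ[μ] fun x => b * g x) :
    ∫ x, conj (f x) * g x ∂μ = conj a * b * ∫ x, conj (f x) * g x ∂μ := by
  have hfg : AEStronglyMeasurable (fun x => conj (f x) * g x) (μ.map T) := by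
    rw [hT.map_eq]; exact hf.star.mul hg
  calc ∫ x, conj (f x) * g x ∂μ = ∫ x, conj (f (T x)) * g (T x) ∂μ := by
        rw [← integral_map hT.aemeasurable hfg, hT.map_eq]
    _ = ∫ x, conj a * b * (conj (f x) * g x) ∂μ := by
        refine integral_congr_ae ?_
        filter_upwards [hfT, hgT] with x hfx hgx
        rw [hfx, hgx, map_mul]
        ring
    _ = conj a * b * ∫ x, conj (f x) * g x ∂μ := integral_const_mul _ _

def IsFlowEigenfunction (μ : Measure X) (φ : ℝ → X → X) (c : ℝ) (f : X → ℂ) : Prop :=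
  ∀ t, (fun x => f (φ t x)) =ᵐ[μ] fun x => 𝐞 (c * t) * f x

def flowEigenvalues (μ : Measure X) (φ : ℝ → X → X) : Set ℝ :=
  {c | ∃ f : X → ℂ, MemLp f 2 μ ∧ ¬ f =ᵐ[μ] 0 ∧ IsFlowEigenfunction μ φ c f}

variable {φ : ℝ → X → X}

theorem IsFlowEigenfunction.integral_conj_mul_eq_zero (hφ : ∀ t, MeasurePreserving (φ t) μ μ)
    {c c' : ℝ} (hcc' : c ≠ c') {f g : X → ℂ} (hf : AEStronglyMeasurable f μ)
    (hg : AEStronglyMeasurable g μ) (hfc : IsFlowEigenfunction μ φ c f)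
    (hgc' : IsFlowEigenfunction μ φ c' g) :
    ∫ x, conj (f x) * g x ∂μ = 0 := by
  -- at time `t` the phases of the two eigenfunctions have drifted apart by half a turn
  set t := (2 * (c' - c))⁻¹
  have hhalf : -(c * t) + c' * t = 1 / 2 := by
    have : c' - c ≠ 0 := sub_ne_zero.2 hcc'.symm
    simp only [t]
    field_simp
    ring
  have hphase : conj (𝐞 (c * t) : ℂ) * 𝐞 (c' * t) = -1 := by
    rw [← Circle.coe_inv_eq_conj, ← AddChar.map_neg_eq_inv, ← Circle.coe_mul,
      ← AddChar.map_add_eq_mul, hhalf, Real.fourierChar_apply, ← Complex.exp_pi_mul_I]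
    push_cast
    ring_nf
  have h := integral_conj_mul_eq_of_comp_ae_eq_mul (hφ t) hf hg (hfc t) (hgc' t)
  rw [hphase] at h
  linear_combination h / 2

theorem MeasureTheory.MemLp.inner_toLp {f g : X → ℂ} (hf : MemLp f 2 μ) (hg : MemLp g 2 μ) :
    inner ℂ (hf.toLp f) (hg.toLp g) = ∫ x, conj (f x) * g x ∂μ := by
  rw [L2.inner_def]
  refine integral_congr_ae ?_
  filter_upwards [hf.coeFn_toLp, hg.coeFn_toLp] with x hfx hgx
  rw [hfx, hgx, RCLike.inner_apply, mul_comm]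

theorem flowEigenvalues_countable [MeasurableSpace.CountablyGenerated X] [SFinite μ]
    (hφ : ∀ t, MeasurePreserving (φ t) μ μ) : (flowEigenvalues μ φ).Countable := by
  have : Fact ((2 : ENNReal) ≠ ⊤) := ⟨by simp⟩
  choose f hf hf0 hfc using fun c : flowEigenvalues μ φ => c.2
  have hne : ∀ c, (hf c).toLp (f c) ≠ 0 := fun c h =>
    hf0 c ((hf c).coeFn_toLp.symm.trans (by rw [h]; exact Lp.coeFn_zero ℂ 2 μ))
  let v c : Lp ℂ 2 μ := (‖(hf c).toLp (f c)‖⁻¹ : ℂ) • (hf c).toLp (f c)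
  have hv : Orthonormal ℂ v := by
    refine ⟨fun c => ?_, fun c c' hcc' => ?_⟩
    · rw [norm_smul, norm_inv, Complex.norm_real, norm_norm,
        inv_mul_cancel₀ (norm_ne_zero_iff.2 (hne c))]
    · simp only [v, inner_smul_left, inner_smul_right, MemLp.inner_toLp,
        (hfc c).integral_conj_mul_eq_zero hφ (Subtype.coe_ne_coe.2 hcc')
          (hf c).aestronglyMeasurable (hf c').aestronglyMeasurable (hfc c'), mul_zero]
  exact Set.countable_coe_iff.1 hv.countable

theorem FlowErgodic.prod_measure_eq_zero_or_one {Y : Type*} [MeasurableSpace Y]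
    {ν : Measure Y} [SFinite ν] (herg : FlowErgodic μ φ) {A : Set (X × Y)} (hA : MeasurableSet A)
    (hinv : ∀ t, (fun x => ν (Prod.mk (φ t x) ⁻¹' A)) =ᵐ[μ] fun x => ν (Prod.mk x ⁻¹' A))
    (h01 : ∀ᵐ x ∂μ, ν (Prod.mk x ⁻¹' A) = 0 ∨ ν (Prod.mk x ⁻¹' A) = 1) :
    μ.prod ν A = 0 ∨ μ.prod ν A = 1 := by
  set B := {x | ν (Prod.mk x ⁻¹' A) = 1}
  have hB : MeasurableSet B := measurable_measure_prodMk_left hA (measurableSet_singleton 1)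
  have hBinv : ∀ t, φ t ⁻¹' B =ᵐ[μ] B := fun t => by
    filter_upwards [hinv t] with x hx
    change (_ = 1) = (_ = 1)
    rw [hx]
  have hAB : μ.prod ν A = μ B := by
    rw [Measure.prod_apply hA, ← lintegral_indicator_one hB]
    refine lintegral_congr_ae ?_
    filter_upwards [h01] with x hx
    rcases hx with hx | hx <;> simp [B, hx]
  rw [hAB]
  exact herg B hB hBinv

end Eigenfunctions

section SkewProduct

variable {X : Type*} [MeasurableSpace X] {μ : Measure X} {T : ℝ} [Fact (0 < T)]

def skewProductFlow (φ : ℝ → X → X) (s : ℝ) (t : ℝ) : X × AddCircle T → X × AddCircle T :=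
  Prod.map (φ t) (· + ((s * t : ℝ) : AddCircle T))

noncomputable def sliceFourierCoeff (A : Set (X × AddCircle T)) (n : ℤ) (x : X) : ℂ :=
  fourierCoeff ((Prod.mk x ⁻¹' A).indicator 1) n

theorem memLp_sliceFourierCoeff [IsFiniteMeasure μ] {A : Set (X × AddCircle T)}
    (hA : MeasurableSet A) (n : ℤ) : MemLp (sliceFourierCoeff A n) 2 μ := by
  have hmeas : Measurable (sliceFourierCoeff A n) :=
    ((((fourier (-n)).continuous.measurable.comp measurable_snd).smul
      (measurable_const.indicator hA)).stronglyMeasurable.integral_prod_right').measurable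
  refine MemLp.of_bound hmeas.aestronglyMeasurable 1 (ae_of_all _ fun x => ?_)
  refine (norm_integral_le_of_norm_le_const (C := 1) (ae_of_all _ fun r => ?_)).trans_eq (by simp)
  rw [norm_smul, fourier_apply, Circle.norm_coe, one_mul]
  exact (norm_indicator_le_norm_self 1 r).trans_eq norm_one

variable {φ : ℝ → X → X} {s : ℝ} {A : Set (X × AddCircle T)}

theorem isFlowEigenfunction_sliceFourierCoeff
    (hAinv : ∀ t, skewProductFlow φ s t ⁻¹' A =ᵐ[μ.prod haarAddCircle] A) (n : ℤ) :
    IsFlowEigenfunction μ φ (-n * s / T) (sliceFourierCoeff A n) := by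
  intro t
  filter_upwards [Measure.ae_ae_eq_prodMk_preimage_of_prodMap (hAinv t)] with x hx
  have h : sliceFourierCoeff A n x =
      fourier n ((s * t : ℝ) : AddCircle T) * sliceFourierCoeff A n (φ t x) := by
    rw [sliceFourierCoeff,
      ← fourierCoeff_congr_ae (indicator_ae_eq_of_ae_eq_set hx (f := (1 : AddCircle T → ℂ)))]
    exact fourierCoeff_comp_add_right ((Prod.mk (φ t x) ⁻¹' A).indicator 1) _ n
  rw [h, ← mul_assoc, fourier_coe_apply_eq_fourierChar, Real.fourierChar_apply,
    Real.fourierChar_apply, ← Complex.exp_add]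
  convert (one_mul _).symm
  rw [← Complex.exp_zero]
  push_cast
  ring_nf

theorem measure_prodMk_preimage_comp_ae_eq
    (hAinv : ∀ t, skewProductFlow φ s t ⁻¹' A =ᵐ[μ.prod haarAddCircle] A) (t : ℝ) :
    (fun x => haarAddCircle (Prod.mk (φ t x) ⁻¹' A)) =ᵐ[μ]
      fun x => haarAddCircle (Prod.mk x ⁻¹' A) := by
  filter_upwards [Measure.ae_ae_eq_prodMk_preimage_of_prodMap (hAinv t)] with x hx
  rw [← measure_congr hx, measure_preimage_add_right]

theorem ae_measure_prodMk_preimage_eq_zero_or_one [IsFiniteMeasure μ] (hA : MeasurableSet A)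
    (hAinv : ∀ t, skewProductFlow φ s t ⁻¹' A =ᵐ[μ.prod haarAddCircle] A)
    (hs : ∀ n : ℤ, n ≠ 0 → n * s / T ∉ flowEigenvalues μ φ) :
    ∀ᵐ x ∂μ, haarAddCircle (Prod.mk x ⁻¹' A) = 0 ∨ haarAddCircle (Prod.mk x ⁻¹' A) = 1 := by
  have hcoeff : ∀ n : ℤ, n ≠ 0 → sliceFourierCoeff A n =ᵐ[μ] 0 := fun n hn => by
    by_contra h
    refine hs (-n) (neg_ne_zero.2 hn) ⟨_, memLp_sliceFourierCoeff hA n, h, ?_⟩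
    simpa using isFlowEigenfunction_sliceFourierCoeff hAinv n
  have hcoeff' : ∀ᵐ x ∂μ, ∀ n : ℤ, n ≠ 0 → sliceFourierCoeff A n x = 0 := by
    refine ae_all_iff.2 fun n => ?_
    rcases eq_or_ne n 0 with rfl | hn
    · exact ae_of_all _ fun _ h => absurd rfl h
    · filter_upwards [hcoeff n hn] with x hx _ using hx
  filter_upwards [hcoeff'] with x hx
  have hslice : MemLp ((Prod.mk x ⁻¹' A).indicator (1 : AddCircle T → ℂ)) 2 haarAddCircle :=
    (memLp_const 1).indicator (measurable_prodMk_left hA)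
  exact measure_eq_zero_or_one_of_indicator_ae_eq_const
    (ae_eq_const_of_fourierCoeff_eq_zero hslice hx)

theorem FlowErgodic.flowErgodic_skewProductFlow [IsFiniteMeasure μ] (herg : FlowErgodic μ φ)
    (hs : ∀ n : ℤ, n ≠ 0 → n * s / T ∉ flowEigenvalues μ φ) :
    FlowErgodic (μ.prod haarAddCircle) (skewProductFlow (T := T) φ s) := fun _ hA hAinv =>
  herg.prod_measure_eq_zero_or_one hA (measure_prodMk_preimage_comp_ae_eq hAinv)
    (ae_measure_prodMk_preimage_eq_zero_or_one hA hAinv hs)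

end SkewProduct

theorem stmt_3_general
    {X : Type*} [MeasurableSpace X] [StandardBorelSpace X]
    (μ : Measure X) [IsProbabilityMeasure μ]
    (φ : ℝ → X → X)
    (hφpres : ∀ t : ℝ, MeasurePreserving (φ t) μ μ)
    (herg : FlowErgodic μ φ) :
    ∀ᵐ s ∂(volume : Measure ℝ),
      FlowErgodic (μ.prod (volume : Measure (AddCircle (1 : ℝ))))
        (fun t p => (φ t p.1, p.2 + ((s * t : ℝ) : AddCircle (1 : ℝ)))) := by
  have hvol : (volume : Measure (AddCircle (1 : ℝ))) = haarAddCircle := by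
    rw [volume_eq_smul_haarAddCircle, ENNReal.ofReal_one, one_smul]
  filter_upwards [ae_forall_int_mul_notMem (flowEigenvalues_countable hφpres)] with s hs
  rw [hvol]
  exact herg.flowErgodic_skewProductFlow fun n hn => by simpa using hs n hn

theorem stmt_3
    {X : Type*} [MeasurableSpace X] [StandardBorelSpace X]
    (μ : Measure X) [IsProbabilityMeasure μ]
    (φ : ℝ → X → X)
    (hφmeas : Measurable fun p : ℝ × X => φ p.1 p.2)
    (hφ0 : φ 0 = id)
    (hφadd : ∀ s t : ℝ, φ (s + t) = φ s ∘ φ t)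
    (hφpres : ∀ t : ℝ, MeasurePreserving (φ t) μ μ)
    (herg : FlowErgodic μ φ) :
    ∀ᵐ s ∂(volume : Measure ℝ),
      FlowErgodic (μ.prod (volume : Measure (AddCircle (1 : ℝ))))
        (fun t p => (φ t p.1, p.2 + ((s * t : ℝ) : AddCircle (1 : ℝ)))) :=
  stmt_3_general μ φ hφpres herg
end

section
/- Let A be a 6 × 6 integer matrix in the symplectic group Sp(6, ℤ), and let β ∈ ℝ be an eigenvalue of A with β > 1 whose degree over ℚ equals 3. Suppose that every complex root γ of the characteristic polynomial of A with γ ≠ β satisfies |γ| < β. Then β is a Pisot number. -/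
open Matrix

/-- A Pisot number: a real algebraic integer `β > 1` all of whose Galois conjugates
(the other complex roots of its minimal polynomial over `ℚ`) have modulus `< 1`. -/
def IsPisot (β : ℝ) : Prop :=
  1 < β ∧ IsIntegral ℤ β ∧
    ∀ z : ℂ, z ≠ (β : ℂ) → Polynomial.aeval z (minpoly ℚ β) = 0 → ‖z‖ < 1

/-!
A symplectic matrix is conjugate to its inverse transpose (`A⁻¹ = J⁻¹ Aᵀ J`), so `A` and `A⁻¹`
have the same characteristic polynomial and the roots of `χ_A` are closed under `γ ↦ γ⁻¹`.
Hence `β` and `β⁻¹` are algebraic integers, the minimal polynomial of `β` has constant term `±1`,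
and its roots `β, z, w` satisfy `β ‖z‖ ‖w‖ = 1`. If `‖z‖ ≥ 1`, then `w⁻¹` is a root of `χ_A` with
`‖w⁻¹‖ = β ‖z‖ ≥ β`, so `w⁻¹ = β`; but then `z = β z w = ∓1` is a rational root of an
irreducible cubic.
-/

open Polynomial

namespace SymplecticGroup

variable {l : Type*} [DecidableEq l] [Fintype l]

theorem charpoly_inv {R : Type*} [CommRing R] {A : Matrix (l ⊕ l) (l ⊕ l) R}
    (hA : A ∈ symplecticGroup l R) : A⁻¹.charpoly = A.charpoly := by
  rw [inv_eq_symplectic_inv A hA, charpoly_mul_comm, ← Matrix.mul_assoc, Matrix.mul_neg,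
    J_squared, neg_neg, Matrix.one_mul, charpoly_transpose]

theorem isRoot_charpoly_inv {K : Type*} [Field K] {A : Matrix (l ⊕ l) (l ⊕ l) K}
    (hA : A ∈ symplecticGroup l K) {γ : K} (hγ : γ ≠ 0) (h : A.charpoly.IsRoot γ) :
    A.charpoly.IsRoot γ⁻¹ := by
  obtain ⟨u, rfl⟩ : IsUnit A := (isUnit_iff_isUnit_det _).mpr (symplectic_det hA)
  rw [← charpoly_inv hA, ← mem_spectrum_iff_isRoot_charpoly, ← coe_units_inv]
  rw [← mem_spectrum_iff_isRoot_charpoly] at h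
  exact spectrum.inv_mem_iff (r := Units.mk0 γ hγ) |>.mp h

end SymplecticGroup

theorem Matrix.eval_charpoly_map_intCast {n S : Type*} [Fintype n] [DecidableEq n] [CommRing S]
    (A : Matrix n n ℤ) (x : S) :
    (A.map (Int.cast : ℤ → S)).charpoly.eval x = aeval x A.charpoly := by
  rw [aeval_def, algebraMap_int_eq, ← eval_map, ← charpoly_map]
  rfl

theorem minpoly.isUnit_coeff_zero {R S : Type*} [CommRing R] [IsDomain R] [IsIntegrallyClosed R]
    [Field S] [Algebra R S] [Module.IsTorsionFree R S] {x : S} (hx0 : x ≠ 0)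
    (hx : IsIntegral R x) (hx' : IsIntegral R x⁻¹) : IsUnit ((minpoly R x).coeff 0) := by
  let _ : Invertible x⁻¹ := invertibleOfNonzero (inv_ne_zero hx0)
  have hrev : Polynomial.aeval x (minpoly R x⁻¹).reverse = 0 := by
    have h := (eval₂_reverse_eq_zero_iff _ x⁻¹ _).mpr (minpoly.aeval R x⁻¹)
    rwa [invOf_eq_inv, inv_inv] at h
  obtain ⟨s, hs⟩ := minpoly.isIntegrallyClosed_dvd hx hrev
  refine IsUnit.of_mul_eq_one (s.coeff 0) ?_
  rw [← mul_coeff_zero, ← hs, coeff_zero_reverse, (minpoly.monic hx').leadingCoeff]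

theorem minpoly.abs_coeff_zero_rat {K : Type*} [Field K] [CharZero K] {x : K} (hx0 : x ≠ 0)
    (hx : IsIntegral ℤ x) (hx' : IsIntegral ℤ x⁻¹) : |(minpoly ℚ x).coeff 0| = 1 := by
  rw [minpoly.isIntegrallyClosed_eq_field_fractions' ℚ hx, coeff_map, eq_intCast,
    ← Int.cast_abs, Int.isUnit_iff_abs_eq.mp (isUnit_coeff_zero hx0 hx hx'), Int.cast_one]

theorem minpoly.natDegree_eq_one_of_aeval_algebraMap {K L M : Type*} [Field K] [Ring L]
    [IsDomain L] [Algebra K L] [Ring M] [Nontrivial M] [Algebra K M] {x : L}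
    (hx : IsIntegral K x) {r : K} (h : Polynomial.aeval (algebraMap K M r) (minpoly K x) = 0) :
    (minpoly K x).natDegree = 1 := by
  rw [aeval_algebraMap_apply, map_eq_zero_iff _ (algebraMap K M).injective,
    coe_aeval_eq_eval] at h
  exact natDegree_eq_of_degree_eq_some
    (degree_eq_one_of_irreducible_of_root (minpoly.irreducible hx) h)

theorem Polynomial.exists_aeval_eq_zero_mul_mul_eq_of_natDegree_eq_three {K L : Type*} [Field K]
    [Field L] [Algebra K L] [DecidableEq L] {p : K[X]} (hs : (p.map (algebraMap K L)).Splits)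
    (hm : p.Monic) (h3 : p.natDegree = 3) {x y : L} (hx : aeval x p = 0) (hy : aeval y p = 0)
    (hxy : x ≠ y) : ∃ w, aeval w p = 0 ∧ x * y * w = -algebraMap K L (p.coeff 0) := by
  set pL := p.map (algebraMap K L)
  have hpL : pL ≠ 0 := (hm.map _).ne_zero
  have hroot (z : L) : z ∈ pL.roots ↔ aeval z p = 0 := by
    rw [mem_roots hpL, IsRoot, eval_map_algebraMap]
  have hx' : x ∈ pL.roots := (hroot x).mpr hx
  have hy' : y ∈ pL.roots.erase x := (Multiset.mem_erase_of_ne hxy.symm).mpr ((hroot y).mpr hy)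
  obtain ⟨w, hw⟩ : ∃ w, (pL.roots.erase x).erase y = {w} := by
    rw [← Multiset.card_eq_one, Multiset.card_erase_of_mem hy', Multiset.card_erase_of_mem hx',
      ← hs.natDegree_eq_card_roots, hm.natDegree_map, h3]
    rfl
  have hroots : pL.roots = x ::ₘ y ::ₘ {w} := by
    rw [← hw, Multiset.cons_erase hy', Multiset.cons_erase hx']
  refine ⟨w, (hroot w).mp (by simp [hroots]), ?_⟩
  rw [← coeff_map, hs.coeff_zero_eq_prod_roots_of_monic (hm.map _), hm.natDegree_map, h3, hroots]
  simp only [Multiset.prod_cons, Multiset.prod_singleton]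
  ring

theorem isPisot_of_natDegree_minpoly_eq_three {β : ℝ} (hβ : 1 < β)
    (hdeg : (minpoly ℚ β).natDegree = 3) {q : ℤ[X]} (hq : q.Monic) (hβq : aeval β q = 0)
    (hrecip : ∀ γ : ℂ, γ ≠ 0 → aeval γ q = 0 → aeval γ⁻¹ q = 0)
    (hmax : ∀ γ : ℂ, γ ≠ β → aeval γ q = 0 → ‖γ‖ < β) : IsPisot β := by
  have hβ0 : 0 < β := zero_lt_one.trans hβ
  have hint : IsIntegral ℤ β := ⟨q, hq, hβq⟩
  have hint' : IsIntegral ℤ β⁻¹ := by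
    refine (isIntegral_algHom_iff ((Algebra.ofId ℝ ℂ).restrictScalars ℤ)
      (algebraMap ℝ ℂ).injective).mp ⟨q, hq, ?_⟩
    rw [AlgHom.restrictScalars_apply, Algebra.ofId_apply, Complex.coe_algebraMap,
      Complex.ofReal_inv]
    refine hrecip β (by exact_mod_cast hβ0.ne') ?_
    rw [← Complex.coe_algebraMap, aeval_algebraMap_apply, hβq, map_zero]
  refine ⟨hβ, hint, fun z hzβ hz => ?_⟩
  set p := minpoly ℚ β
  have hpq : ∀ y : ℂ, aeval y p = 0 → aeval y q = 0 := fun y hy => by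
    rw [← aeval_map_algebraMap ℚ] at hβq ⊢
    exact eval₂_eq_zero_of_dvd_of_eval₂_eq_zero _ _ (minpoly.dvd ℚ β hβq) hy
  have hβp : aeval (β : ℂ) p = 0 := by
    rw [← Complex.coe_algebraMap, aeval_algebraMap_apply, minpoly.aeval, map_zero]
  obtain ⟨w, hw, hprod⟩ := exists_aeval_eq_zero_mul_mul_eq_of_natDegree_eq_three
    (IsAlgClosed.splits _) (minpoly.monic hint.tower_top) hdeg hβp hz hzβ.symm
  have hnorm : β * ‖z‖ * ‖w‖ = 1 := by
    have h := congrArg norm hprod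
    rwa [norm_mul, norm_mul, norm_neg, eq_ratCast, Complex.norm_ratCast, ← Rat.cast_abs,
      minpoly.abs_coeff_zero_rat hβ0.ne' hint hint', Rat.cast_one, Complex.norm_real,
      Real.norm_of_nonneg hβ0.le] at h
  by_contra hz1
  push Not at hz1
  have hw0 : w ≠ 0 := by rintro rfl; simp at hnorm
  have hwβ : w⁻¹ = β := by
    by_contra hne
    have h := hmax _ hne (hrecip w hw0 (hpq w hw))
    have hw' : ‖w⁻¹‖ = β * ‖z‖ := by
      rw [norm_inv]; field_simp; linarith
    nlinarith
  have hzp : z = algebraMap ℚ ℂ (-p.coeff 0) := by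
    rw [map_neg, ← hprod, ← hwβ]
    field_simp
  have h1 := minpoly.natDegree_eq_one_of_aeval_algebraMap hint.tower_top (hzp ▸ hz)
  exact absurd (hdeg.symm.trans h1) (by norm_num)

theorem stmt_9
    (A : Matrix (Fin 3 ⊕ Fin 3) (Fin 3 ⊕ Fin 3) ℤ)
    (hA : Aᵀ * Matrix.fromBlocks (0 : Matrix (Fin 3) (Fin 3) ℤ) (-1) 1 0 * A =
      Matrix.fromBlocks (0 : Matrix (Fin 3) (Fin 3) ℤ) (-1) 1 0)
    (β : ℝ) (hβ1 : 1 < β)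
    (hroot : ((A.map (Int.cast : ℤ → ℝ)).charpoly).eval β = 0)
    (hdeg : (minpoly ℚ β).natDegree = 3)
    (hmax : ∀ γ : ℂ, γ ≠ (β : ℂ) →
      ((A.map (Int.cast : ℤ → ℂ)).charpoly).eval γ = 0 → ‖γ‖ < β) :
    IsPisot β := by
  have hsymp : A.map (Int.cast : ℤ → ℂ) ∈ symplecticGroup (Fin 3) ℂ :=
    SymplecticGroup.map_mem (SymplecticGroup.mem_iff'.mpr hA) (Int.castRingHom ℂ)
  refine isPisot_of_natDegree_minpoly_eq_three hβ1 hdeg A.charpoly_monic ?_ ?_ ?_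
  · rwa [← eval_charpoly_map_intCast]
  · intro γ hγ h
    rw [← eval_charpoly_map_intCast] at h ⊢
    exact SymplecticGroup.isRoot_charpoly_inv hsymp hγ h
  · intro γ hγ h
    exact hmax γ hγ (by rwa [eval_charpoly_map_intCast])
end
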